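/- arXiv:2012.10591 — 3 statements merged into one kernel-verified Lean document; each statement's English description precedes it below -/
import Mathlib

section
/- The orientation of the path on 10 vertices v₁, v₂, …, v₁₀ with arc set {v₁→v₂, v₃→v₂, v₃→v₄, v₅→v₄, v₅→v₆, v₇→v₆, v₇→v₈, v₉→v₈, v₉→v₁₀} is not (2,3)-cordial. (This disproves the conjecture that every orientation of every path other than the 4-vertex path is (2,3)-cordial.) -/
open Finset

variable {V : Type*} [Fintype V] [DecidableEq V]

/-- The label induced on an arc `a = (u, v)` by a vertex labeling `f : V → {0,1}`:
`g(u→v) = f(v) - f(u)`. -/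
def arcLabel (f : V → Fin 2) (a : V × V) : ℤ := ((f a.2 : ℕ) : ℤ) - ((f a.1 : ℕ) : ℤ)

/-- The number of arcs of `A` receiving induced label `i`. -/
def labelCount (A : Finset (V × V)) (f : V → Fin 2) (i : ℤ) : ℕ :=
  (A.filter fun a => arcLabel f a = i).card

/-- A vertex labeling `f : V → {0,1}` is friendly if the number of vertices labeled `0`
and the number labeled `1` differ by at most `1`. -/
def Friendly (f : V → Fin 2) : Prop :=
  |((univ.filter fun v => f v = 0).card : ℤ) - ((univ.filter fun v => f v = 1).card : ℤ)| ≤ 1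

/-- A digraph (given by its arc set `A`) is (2,3)-cordial if there is a friendly vertex
labeling whose induced arc labeling `g` satisfies
`-1 ≤ |g⁻¹(i)| - |g⁻¹(j)| ≤ 1` for all `i, j ∈ {-1, 0, 1}`. -/
def Cordial (A : Finset (V × V)) : Prop :=
  ∃ f : V → Fin 2, Friendly f ∧
    ∀ i ∈ ({-1, 0, 1} : Finset ℤ), ∀ j ∈ ({-1, 0, 1} : Finset ℤ),
      -1 ≤ (labelCount A f i : ℤ) - (labelCount A f j : ℤ) ∧
        (labelCount A f i : ℤ) - (labelCount A f j : ℤ) ≤ 1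

/-- The alternating orientation of the path on 10 vertices `v₁, …, v₁₀` (here
`vᵢ` is `i - 1 : Fin 10`), with arcs
`v₁→v₂, v₃→v₂, v₃→v₄, v₅→v₄, v₅→v₆, v₇→v₆, v₇→v₈, v₉→v₈, v₉→v₁₀`. -/
def altPath10 : Finset (Fin 10 × Fin 10) :=
  {(0, 1), (2, 1), (2, 3), (4, 3), (4, 5), (6, 5), (6, 7), (8, 7), (8, 9)}

lemma key : ∀ x0 x1 x2 x3 x4 x5 x6 x7 x8 x9 : Fin 2,
    ¬ (Friendly ![x0, x1, x2, x3, x4, x5, x6, x7, x8, x9] ∧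
      ∀ i ∈ ({-1, 0, 1} : Finset ℤ), ∀ j ∈ ({-1, 0, 1} : Finset ℤ),
        -1 ≤ (labelCount altPath10 ![x0, x1, x2, x3, x4, x5, x6, x7, x8, x9] i : ℤ) -
            (labelCount altPath10 ![x0, x1, x2, x3, x4, x5, x6, x7, x8, x9] j : ℤ) ∧
          (labelCount altPath10 ![x0, x1, x2, x3, x4, x5, x6, x7, x8, x9] i : ℤ) -
            (labelCount altPath10 ![x0, x1, x2, x3, x4, x5, x6, x7, x8, x9] j : ℤ) ≤ 1) := by
  unfold Friendly labelCount arcLabel altPath10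
  set_option maxRecDepth 10000 in decide

/-- The alternating orientation of the path on 10 vertices is not (2,3)-cordial. -/
theorem altPath10_not_cordial : ¬ Cordial altPath10 := by
  rintro ⟨f, hf⟩
  have hfe : f = ![f 0, f 1, f 2, f 3, f 4, f 5, f 6, f 7, f 8, f 9] := by
    funext v; fin_cases v <;> rfl
  rw [hfe] at hf
  exact key _ _ _ _ _ _ _ _ _ _ hf
end

section
/- Every orientation of the path on 10 vertices v₁, …, v₁₀ is (2,3)-cordial, except the alternating orientation with arc set {v₁→v₂, v₃→v₂, v₃→v₄, v₅→v₄, v₅→v₆, v₇→v₆, v₇→v₈, v₉→v₈, v₉→v₁₀} and its reversal. -/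
open Finset

variable {V : Type*} [Fintype V] [DecidableEq V]

/-- The orientation of the path `v₁ - v₂ - ⋯ - v₁₀` (vertices `0, …, 9 : Fin 10`)
determined by `o : Fin 9 → Bool`: the `i`-th edge `{vᵢ₊₁, vᵢ₊₂}` (i.e. between
vertices `i` and `i+1`) is oriented forwards if `o i = true` and backwards otherwise. -/
def pathOrientation (o : Fin 9 → Bool) : Finset (Fin 10 × Fin 10) :=
  univ.image fun i : Fin 9 =>
    if o i then (i.castSucc, i.succ) else (i.succ, i.castSucc)

/-- The alternating orientation `v₁→v₂, v₃→v₂, v₃→v₄, v₅→v₄, v₅→v₆, v₇→v₆,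
v₇→v₈, v₉→v₈, v₉→v₁₀`: even-indexed edges point forwards, odd-indexed ones backwards. -/
def altOrientation : Fin 9 → Bool := fun i => decide (i.val % 2 = 0)

/-! A (2,3)-cordial labeling of the path must use five 1s and give each of the three labels to
exactly three of the nine arcs, so the labels sum to zero. In the alternating orientation every
inner vertex is a source or a sink of degree two, so the label sum is `f v₁₀ - f v₁` plus an even
number; a zero sum forces `f v₁ = f v₁₀` and hence an even number of 1s. Reversing the arcs only
negates the labels. Every other orientation is served by one of nine explicit labelings. -/

theorem arcLabel_mem {U : Type*} (f : U → Fin 2) (a : U × U) :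
    arcLabel f a ∈ ({-1, 0, 1} : Finset ℤ) := by
  have h₁ := (f a.1).isLt
  have h₂ := (f a.2).isLt
  simp only [arcLabel, mem_insert, mem_singleton]
  omega

theorem labelCount_image {E U : Type*} [Fintype E] [DecidableEq U] {φ : E → U × U}
    (hφ : Function.Injective φ) (f : U → Fin 2) (k : ℤ) :
    labelCount (univ.image φ) f k = #{e | arcLabel f (φ e) = k} := by
  rw [labelCount, filter_image, card_image_of_injective _ hφ]

theorem card_filter_eq_one_eq_sum {U : Type*} [Fintype U] (f : U → Fin 2) :
    #{v | f v = 1} = ∑ v, (f v : ℕ) := by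
  rw [card_filter]
  refine sum_congr rfl fun v _ => ?_
  have := (f v).isLt
  split_ifs with h <;> rw [Fin.ext_iff] at h <;> simp only [Fin.val_one] at h <;> omega

theorem friendly_iff_card_eq {U : Type*} [Fintype U] {n : ℕ} (hU : Fintype.card U = 2 * n)
    (f : U → Fin 2) : Friendly f ↔ #{v | f v = 1} = n := by
  have hsplit : #{v | f v = 0} + #{v | f v = 1} = Fintype.card U := by
    rw [← card_univ, ← card_filter_add_card_filter_not (s := univ) (p := fun v => f v = 0)]
    congr 1
    refine congrArg card (filter_congr fun v _ => ?_)
    rw [Fin.ext_iff, Fin.ext_iff]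
    omega
  rw [Friendly, abs_le]
  omega

theorem sum_eq_card_filter_one_sub {α : Type*} {s : Finset α} {g : α → ℤ}
    (hg : ∀ x ∈ s, g x ∈ ({-1, 0, 1} : Finset ℤ)) :
    ∑ x ∈ s, g x = #{x ∈ s | g x = 1} - #{x ∈ s | g x = -1} := by
  have hsplit : ∀ x ∈ s, g x = (if g x = 1 then 1 else 0) - (if g x = -1 then 1 else 0) := by
    intro x hx
    have := hg x hx
    simp only [mem_insert, mem_singleton] at this
    rcases this with h | h | h <;> simp [h]
  rw [sum_congr rfl hsplit, sum_sub_distrib, sum_boole, sum_boole]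

def pathArc (o : Fin 9 → Bool) (i : Fin 9) : Fin 10 × Fin 10 :=
  if o i then (i.castSucc, i.succ) else (i.succ, i.castSucc)

theorem pathArc_injective (o : Fin 9 → Bool) : Function.Injective (pathArc o) := by
  intro i j h
  unfold pathArc at h
  split_ifs at h <;> simp only [Prod.ext_iff, Fin.ext_iff, Fin.val_castSucc, Fin.val_succ] at h <;>
    ext <;> omega

theorem arcLabel_pathArc_not (o : Fin 9 → Bool) (f : Fin 10 → Fin 2) (i : Fin 9) :
    arcLabel f (pathArc (fun i => !o i) i) = -arcLabel f (pathArc o i) := by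
  unfold pathArc arcLabel
  cases h : o i <;> simp [h]

def IsBalancedPathLabeling (o : Fin 9 → Bool) (f : Fin 10 → Fin 2) : Prop :=
  #{v | f v = 1} = 5 ∧ ∀ k ∈ ({-1, 0, 1} : Finset ℤ), #{i | arcLabel f (pathArc o i) = k} = 3

instance (o : Fin 9 → Bool) : DecidablePred (IsBalancedPathLabeling o) := fun _ => by
  unfold IsBalancedPathLabeling; infer_instance

theorem cordial_pathOrientation_iff (o : Fin 9 → Bool) :
    Cordial (pathOrientation o) ↔ ∃ f, IsBalancedPathLabeling o f := by
  simp only [Cordial, IsBalancedPathLabeling, pathOrientation, ← pathArc.eq_def,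
    labelCount_image (pathArc_injective o),
    friendly_iff_card_eq (by simp : Fintype.card (Fin 10) = 2 * 5)]
  refine exists_congr fun f => and_congr_right fun _ => ?_
  have hcount := card_eq_sum_card_fiberwise (s := univ) (t := {-1, 0, 1})
    fun i _ => arcLabel_mem f (pathArc o i)
  simp only [card_univ, Fintype.card_fin, mem_insert, mem_singleton, forall_eq_or_imp, forall_eq,
    sum_insert, sum_singleton, Int.reduceNeg, reduceCtorEq, or_self, not_false_eq_true,
    neg_eq_zero, one_ne_zero, zero_ne_one] at hcount ⊢
  omega

theorem IsBalancedPathLabeling.sum_arcLabel_eq_zero {o : Fin 9 → Bool} {f : Fin 10 → Fin 2}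
    (hf : IsBalancedPathLabeling o f) : ∑ i, arcLabel f (pathArc o i) = 0 := by
  rw [sum_eq_card_filter_one_sub fun i _ => arcLabel_mem f (pathArc o i),
    hf.2 1 (by simp), hf.2 (-1) (by simp)]
  rfl

theorem sum_arcLabel_pathArc_alt_ne_zero (f : Fin 10 → Fin 2) (hf : #{v | f v = 1} = 5) :
    ∑ i, arcLabel f (pathArc altOrientation i) ≠ 0 := by
  have h₀ := (f 0).isLt
  have h₉ := (f 9).isLt
  rw [card_filter_eq_one_eq_sum] at hf
  simp only [Fin.sum_univ_succ, Fin.isValue, Fin.succ_zero_eq_one, Fin.succ_one_eq_two,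
    Fin.reduceSucc, univ_unique, Fin.default_eq_zero, sum_singleton, arcLabel, pathArc,
    altOrientation, decide_eq_true_eq, sum_sub_distrib, Fin.coe_ofNat_eq_mod, Nat.zero_mod,
    ↓reduceIte, Fin.castSucc_zero, Fin.val_succ, Fin.castSucc_succ, Nat.reduceAdd, zero_add,
    Nat.mod_succ, one_ne_zero, Nat.mod_self, Nat.reduceMod, Fin.val_eq_zero, ne_eq] at hf ⊢
  intro h
  have : (f 0 : ℕ) = f 9 := by omega
  omega

-- Each of these labelings is balanced for 160 of the 510 orientations; together they cover all.
def cordialLabelings : List (Fin 10 → Fin 2) :=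
  [![1, 0, 1, 0, 0, 0, 1, 0, 1, 1], ![1, 0, 0, 1, 0, 1, 0, 0, 1, 1],
   ![0, 1, 1, 0, 1, 1, 0, 1, 0, 0], ![0, 1, 0, 0, 1, 1, 1, 0, 1, 0],
   ![1, 1, 0, 0, 1, 0, 1, 0, 0, 1], ![1, 1, 0, 1, 0, 0, 0, 1, 0, 1],
   ![1, 0, 1, 1, 0, 0, 1, 0, 0, 1], ![0, 1, 1, 0, 1, 1, 0, 0, 1, 0],
   ![1, 0, 1, 0, 1, 1, 0, 0, 0, 1]]

theorem exists_mem_cordialLabelings :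
    ∀ o : Fin 9 → Bool, o ≠ altOrientation → (o ≠ fun i => !altOrientation i) →
      ∃ f ∈ cordialLabelings, IsBalancedPathLabeling o f := by
  decide +kernel

/-- An orientation of the path on 10 vertices is (2,3)-cordial if and only if it is
neither the alternating orientation nor its reversal. -/
theorem path10_cordial_iff (o : Fin 9 → Bool) :
    Cordial (pathOrientation o) ↔
      o ≠ altOrientation ∧ o ≠ fun i => !(altOrientation i) := by
  rw [cordial_pathOrientation_iff]
  constructor
  · rintro ⟨f, hf⟩
    have hsum := hf.sum_arcLabel_eq_zero
    constructor <;> rintro rfl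
    · exact sum_arcLabel_pathArc_alt_ne_zero f hf.1 hsum
    · simp only [arcLabel_pathArc_not, sum_neg_distrib, neg_eq_zero] at hsum
      exact sum_arcLabel_pathArc_alt_ne_zero f hf.1 hsum
  · rintro ⟨halt, hrev⟩
    obtain ⟨f, -, hf⟩ := exists_mem_cordialLabelings o halt hrev
    exact ⟨f, hf⟩
end

section
/- For every integer n ≥ 6, the complete graph K_n on n vertices is not (2,3)-orientable. -/
open Finset

variable {V : Type*} [Fintype V] [DecidableEq V]

/-- `A` is an orientation of the simple graph `G`: every arc of `A` lies along an
edge of `G`, and each edge `{u,v}` of `G` carries exactly one of the arcs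
`u→v`, `v→u`. -/
def IsOrientation (G : SimpleGraph V) (A : Finset (V × V)) : Prop :=
  (∀ a ∈ A, G.Adj a.1 a.2) ∧ ∀ u v : V, G.Adj u v → ((u, v) ∈ A ↔ (v, u) ∉ A)

/-- A graph is (2,3)-orientable if some orientation of it is (2,3)-cordial. -/
def Orientable (G : SimpleGraph V) : Prop :=
  ∃ A : Finset (V × V), IsOrientation G A ∧ Cordial A


lemma orient_count (A : Finset (V × V)) (hA : IsOrientation (⊤ : SimpleGraph V) A)
    (Q : V × V → Prop) [DecidablePred Q] :
    (A.filter Q).card + (A.filter fun p => Q p.swap).card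
      = ((univ ×ˢ univ).filter fun p => p.1 ≠ p.2 ∧ Q p).card := by
  have hne : ∀ p ∈ A, p.1 ≠ p.2 := by
    intro p hp
    have := hA.1 p hp
    simpa using this
  have hset : ((univ ×ˢ univ).filter fun p => p.1 ≠ p.2 ∧ Q p)
      = A.filter Q ∪ (A.filter fun p => Q p.swap).map
          ⟨Prod.swap, Prod.swap_injective⟩ := by
    ext p
    simp only [mem_filter, mem_union, mem_map, Function.Embedding.coeFn_mk,
      mem_product, mem_univ, true_and]
    constructor
    · rintro ⟨hpne, hQ⟩
      have hadj : (⊤ : SimpleGraph V).Adj p.1 p.2 := by simpa using hpne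
      by_cases hpA : p ∈ A
      · exact Or.inl ⟨hpA, hQ⟩
      · refine Or.inr ⟨p.swap, ⟨?_, ?_⟩, ?_⟩
        · simp only [Prod.swap]
          by_contra h2
          exact hpA (by simpa using (hA.2 p.1 p.2 hadj).mpr (by simpa using h2))
        · simpa using hQ
        · simp
    · rintro (⟨hpA, hQ⟩ | ⟨q, ⟨hqA, hQ⟩, rfl⟩)
      · exact ⟨hne p hpA, hQ⟩
      · exact ⟨(hne q hqA).symm, by simpa using hQ⟩
  rw [hset, card_union_of_disjoint, card_map]
  rw [disjoint_left]
  rintro p hp hp2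
  simp only [mem_map, mem_filter, Function.Embedding.coeFn_mk] at hp hp2
  obtain ⟨q, ⟨hqA, _⟩, rfl⟩ := hp2
  have hqne := hne q hqA
  have hadj : (⊤ : SimpleGraph V).Adj q.1 q.2 := by simpa using hqne
  have := (hA.2 q.1 q.2 hadj).mp (by simpa using hqA)
  exact this (by simpa [Prod.swap] using hp.1)

lemma prod_count (f : V → Fin 2) (x y : Fin 2) :
    ((univ ×ˢ univ).filter fun p : V × V => f p.1 = x ∧ f p.2 = y).card
      = (univ.filter fun v => f v = x).card * (univ.filter fun v => f v = y).card := by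
  rw [← card_product]
  congr 1
  ext p
  simp only [mem_filter, mem_product, mem_univ, true_and]

/-- For every `n ≥ 6`, the complete graph `K_n` is not (2,3)-orientable. -/
theorem completeGraph_not_orientable (n : ℕ) (hn : 6 ≤ n) :
    ¬ Orientable (⊤ : SimpleGraph (Fin n)) := by
  rintro ⟨A, hA, f, hf, hcord⟩
  set a := (univ.filter fun v => f v = 0).card with ha
  set b := (univ.filter fun v => f v = 1).card with hb
  -- a + b = n
  have hab : a + b = n := by
    have h1 : (univ.filter fun v => f v = 1) = (univ.filter fun v => ¬ f v = 0) := by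
      apply filter_congr
      intro v _
      have : ∀ x : Fin 2, x = 1 ↔ ¬ x = 0 := by decide
      exact this (f v)
    rw [ha, hb, h1, Finset.card_filter_add_card_filter_not]
    simp
  -- 2 * c0 + n = a^2 + b^2
  have hL0 : ∀ p : Fin n × Fin n, arcLabel f p = 0 ↔ f p.1 = f p.2 := by
    intro p
    have : ∀ x y : Fin 2, ((y : ℕ) : ℤ) - ((x : ℕ) : ℤ) = 0 ↔ x = y := by decide
    exact this (f p.1) (f p.2)
  have hL0swap : ∀ p : Fin n × Fin n, arcLabel f p.swap = 0 ↔ arcLabel f p = 0 := by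
    intro p
    have : ∀ x y : Fin 2, (((x : ℕ) : ℤ) - ((y : ℕ) : ℤ) = 0)
        ↔ (((y : ℕ) : ℤ) - ((x : ℕ) : ℤ) = 0) := by decide
    exact this (f p.1) (f p.2)
  have hc0 : 2 * labelCount A f 0 + n = a * a + b * b := by
    have key := orient_count A hA (fun p => arcLabel f p = 0)
    have e1 : (A.filter fun p => arcLabel f p.swap = 0)
        = (A.filter fun p => arcLabel f p = 0) := by
      apply filter_congr; intro p _; exact hL0swap p
    rw [e1] at key
    have hsame : ((univ ×ˢ univ).filter fun p : Fin n × Fin n => f p.1 = f p.2).card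
        = a * a + b * b := by
      have hsplit : ((univ ×ˢ univ).filter fun p : Fin n × Fin n => f p.1 = f p.2)
          = ((univ ×ˢ univ).filter fun p : Fin n × Fin n => f p.1 = 0 ∧ f p.2 = 0)
            ∪ ((univ ×ˢ univ).filter fun p : Fin n × Fin n => f p.1 = 1 ∧ f p.2 = 1) := by
        rw [← filter_or]
        apply filter_congr
        intro p _
        have : ∀ x y : Fin 2, x = y ↔ (x = 0 ∧ y = 0) ∨ (x = 1 ∧ y = 1) := by decide
        exact this (f p.1) (f p.2)
      rw [hsplit, card_union_of_disjoint, prod_count, prod_count]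
      rw [disjoint_left]
      rintro p hp hp2
      simp only [mem_filter] at hp hp2
      have := hp.2.1
      have := hp2.2.1
      simp_all
    have hdiag : ((univ ×ˢ univ).filter fun p : Fin n × Fin n => p.1 = p.2).card = n := by
      have : ((univ ×ˢ univ).filter fun p : Fin n × Fin n => p.1 = p.2)
          = (univ : Finset (Fin n)).diag := by
        ext p
        simp [Finset.mem_diag]
      rw [this, Finset.diag_card, card_univ, Fintype.card_fin]
    have hpartition :
        ((univ ×ˢ univ).filter fun p : Fin n × Fin n => p.1 ≠ p.2 ∧ arcLabel f p = 0).card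
          + ((univ ×ˢ univ).filter fun p : Fin n × Fin n => p.1 = p.2).card
        = ((univ ×ˢ univ).filter fun p : Fin n × Fin n => f p.1 = f p.2).card := by
      have hu : ((univ ×ˢ univ).filter fun p : Fin n × Fin n => f p.1 = f p.2)
          = ((univ ×ˢ univ).filter fun p : Fin n × Fin n => p.1 ≠ p.2 ∧ arcLabel f p = 0)
            ∪ ((univ ×ˢ univ).filter fun p : Fin n × Fin n => p.1 = p.2) := by
        rw [← filter_or]
        apply filter_congr
        intro p _
        constructor
        · intro h
          by_cases hp : p.1 = p.2
          · exact Or.inr hp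
          · exact Or.inl ⟨hp, (hL0 p).mpr h⟩
        · rintro (⟨_, h⟩ | h)
          · exact (hL0 p).mp h
          · rw [h]
      rw [hu, card_union_of_disjoint]
      rw [disjoint_left]
      rintro p hp hp2
      simp only [mem_filter] at hp hp2
      exact hp.2.1 hp2.2
    unfold labelCount
    omega
  -- cp + cm = a * b
  have hcpm : labelCount A f 1 + labelCount A f (-1) = a * b := by
    have key := orient_count A hA (fun p => arcLabel f p = 1)
    have e1 : (A.filter fun p => arcLabel f p.swap = 1)
        = (A.filter fun p => arcLabel f p = -1) := by
      apply filter_congr; intro p _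
      have : ∀ x y : Fin 2, (((x : ℕ) : ℤ) - ((y : ℕ) : ℤ) = 1)
          ↔ (((y : ℕ) : ℤ) - ((x : ℕ) : ℤ) = -1) := by decide
      exact this (f p.1) (f p.2)
    rw [e1] at key
    have e2 : ((univ ×ˢ univ).filter fun p : Fin n × Fin n => p.1 ≠ p.2 ∧ arcLabel f p = 1)
        = ((univ ×ˢ univ).filter fun p : Fin n × Fin n => f p.1 = 0 ∧ f p.2 = 1) := by
      apply filter_congr
      intro p _
      have h01 : ∀ x y : Fin 2, (((y : ℕ) : ℤ) - ((x : ℕ) : ℤ) = 1) ↔ (x = 0 ∧ y = 1) := by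
        decide
      constructor
      · rintro ⟨_, h⟩
        exact (h01 (f p.1) (f p.2)).mp h
      · rintro ⟨h0, h1⟩
        refine ⟨?_, (h01 (f p.1) (f p.2)).mpr ⟨h0, h1⟩⟩
        intro hpe
        rw [hpe, h1] at h0
        exact absurd h0 (by decide)
    rw [e2, prod_count] at key
    exact key
  -- cordiality bounds
  have h01 := hcord 0 (by decide) 1 (by decide)
  have h0m := hcord 0 (by decide) (-1) (by decide)
  -- arithmetic conclusion
  have hc0' : 2 * (labelCount A f 0 : ℤ) + (n : ℤ) = (a : ℤ) * a + (b : ℤ) * b := by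
    exact_mod_cast hc0
  have hcpm' : (labelCount A f 1 : ℤ) + (labelCount A f (-1) : ℤ) = (a : ℤ) * b := by
    exact_mod_cast hcpm
  have hab' : (a : ℤ) + b = n := by exact_mod_cast hab
  have hn' : (6 : ℤ) ≤ (n : ℤ) := by exact_mod_cast hn
  nlinarith [sq_nonneg ((a : ℤ) - b), mul_nonneg (by linarith : (0:ℤ) ≤ (n:ℤ) - 6)
      (by linarith : (0:ℤ) ≤ (n:ℤ) + 2), h01.1, h01.2, h0m.1, h0m.2]
end
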